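/- Let A be an m×n real matrix, Ṽ ∈ ℝ^{n×r}, Ũ ∈ ℝ^{m×(r+ℓ)}, and suppose AṼ = Q₁R₁, (Ũ*A)* = Q₂R₂, and Ũ*AṼ = Q₃R₃ are (economic) QR factorizations with Q₁, Q₂, Q₃ orthonormal. Then the nonzero singular values of the generalized Nyström approximation A_GN = AṼ(Ũ*AṼ)†Ũ*A coincide with the nonzero singular values of the small matrix R₁R₃†Q₃*R₂*; that is, σ(Q₁R₁(Q₃R₃)†R₂*Q₂*) = σ(R₁R₃†Q₃*R₂*) up to trailing zeros. -/

import Mathlib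

/-!
With `Ũᵀ A = R₂ᵀ Q₂ᵀ` and `(Q₃ R₃)† = R₃† Q₃ᵀ`, both matrices equal `Q₁ S Q₂ᵀ` where
`S = R₁ R₃† Q₃ᵀ R₂ᵀ`. Left multiplication by `Q₁` does not change the Gram matrix `Sᵀ S`, and right
multiplication by `Q₂ᵀ` turns it into `Q₂ Sᵀ S Q₂ᵀ`, whose characteristic polynomial is
`X ^ (n - (r + ℓ))` times that of `Sᵀ S`: the singular values only gain zeros.
The pseudoinverse identity holds because `(Q₃ R₃)ᵀ (Q₃ R₃) = R₃ᵀ R₃` makes the Tikhonov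
regularizations of `Q₃ R₃` those of `R₃` times `Q₃ᵀ`. For any `M` these converge: writing
`Mᵀ M = V diag(λ) Vᵀ`, they are `V diag((λ + ε)⁻¹) Vᵀ Mᵀ`, and the rows of `Vᵀ Mᵀ` belonging to
the eigenvalue `0` vanish.
-/

open Matrix

/-- The tuple `f` sorted in nonincreasing order. -/
noncomputable def sortedDesc {α : Type*} [Fintype α] (f : α → ℝ) :
    Fin (Fintype.card α) → ℝ := fun i =>
  let g : Fin (Fintype.card α) → ℝ := f ∘ (Fintype.equivFin α).symm
  g (Tuple.sort g i.rev)

/-- Singular values of a real matrix, in nonincreasing order (generic index types). -/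
noncomputable def sVals {m n : Type*} [Fintype m] [Fintype n] [DecidableEq n]
    (M : Matrix m n ℝ) : Fin (Fintype.card n) → ℝ :=
  sortedDesc fun j => Real.sqrt ((Matrix.isHermitian_conjTranspose_mul_self M).eigenvalues j)

/-- Singular values of a real `Fin m × Fin n` matrix, in nonincreasing order,
`singularValues M 0` being the largest. -/
noncomputable def singularValues {m n : ℕ} (M : Matrix (Fin m) (Fin n) ℝ) :
    Fin n → ℝ := fun i =>
  let g : Fin n → ℝ := fun j =>
    Real.sqrt ((Matrix.isHermitian_conjTranspose_mul_self M).eigenvalues j)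
  g (Tuple.sort g i.rev)

/-- The spectral (operator 2-)norm of a real matrix. -/
noncomputable def specNorm {m n : Type*} [Fintype m] [Fintype n] [DecidableEq n]
    (M : Matrix m n ℝ) : ℝ :=
  ‖LinearMap.toContinuousLinearMap (Matrix.toEuclideanLin M)‖

/-- The Moore-Penrose pseudoinverse of a real matrix, defined via the Tikhonov
regularization limit of `(AᵀA + εI)⁻¹Aᵀ` as `ε` tends to `0` from above. -/
noncomputable def pinv {m n : Type*} [Fintype m] [Fintype n] [DecidableEq n]
    (A : Matrix m n ℝ) : Matrix n m ℝ :=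
  Filter.limUnder (nhdsWithin 0 (Set.Ioi 0)) fun ε : ℝ => (Aᵀ * A + ε • 1)⁻¹ * Aᵀ

/-- A tuple of `k` reals extended to all of `ℕ` by trailing zeros. -/
def padZero {k : ℕ} (f : Fin k → ℝ) : ℕ → ℝ := fun i => if h : i < k then f ⟨i, h⟩ else 0

noncomputable def descSort {k : ℕ} (f : Fin k → ℝ) : Fin k → ℝ := fun i => f (Tuple.sort f i.rev)

lemma pairwise_ofFn_descSort {k : ℕ} (f : Fin k → ℝ) :
    (List.ofFn (descSort f)).Pairwise (· ≥ ·) :=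
  List.pairwise_ofFn.2 fun _ _ hij =>
    Tuple.monotone_sort f (by simpa [Fin.rev_le_rev] using hij.le)

lemma coe_ofFn_descSort {k : ℕ} (f : Fin k → ℝ) :
    (List.ofFn (descSort f) : Multiset ℝ) = Finset.univ.val.map f := by
  have hcomp : descSort f = f ∘ (Fin.revPerm.trans (Tuple.sort f)) := rfl
  rw [← Fin.univ_val_map, hcomp, ← Multiset.map_map, Multiset.map_univ_val_equiv]

lemma padZero_eq_getD_ofFn {k : ℕ} (f : Fin k → ℝ) (i : ℕ) :
    padZero f i = (List.ofFn f).getD i 0 := by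
  unfold padZero
  split_ifs with h
  · rw [List.getD_eq_getElem _ _ (by simpa using h), List.getElem_ofFn]
  · rw [List.getD_eq_default _ _ (by simpa using h)]

lemma padZero_descSort_eq_of_map_eq {a b : ℕ} (f : Fin a → ℝ) (g : Fin b → ℝ)
    (hg : ∀ i, 0 ≤ g i)
    (hfg : Finset.univ.val.map f = Multiset.replicate (a - b) 0 + Finset.univ.val.map g) :
    padZero (descSort f) = padZero (descSort g) := by
  have hsorted : (List.ofFn (descSort g) ++ List.replicate (a - b) 0).Pairwise (· ≥ ·) := by
    refine List.pairwise_append.2 ⟨pairwise_ofFn_descSort g,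
      List.pairwise_replicate.2 (Or.inr le_rfl), fun x hx y hy => ?_⟩
    obtain ⟨j, rfl⟩ := List.mem_ofFn.1 hx
    rw [List.eq_of_mem_replicate hy]
    exact hg _
  have hperm :
      (List.ofFn (descSort f)).Perm (List.ofFn (descSort g) ++ List.replicate (a - b) 0) := by
    rw [← Multiset.coe_eq_coe, ← Multiset.coe_add, Multiset.coe_replicate, coe_ofFn_descSort,
      coe_ofFn_descSort, hfg, add_comm]
  have hlist := hperm.eq_of_pairwise' (pairwise_ofFn_descSort f) hsorted
  funext i
  rw [padZero_eq_getD_ofFn, padZero_eq_getD_ofFn, hlist]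
  grind [List.getD_append, List.getD_append_right, List.getD_replicate]

lemma singularValues_eq_descSort {a b : ℕ} (M : Matrix (Fin a) (Fin b) ℝ) :
    singularValues M =
      descSort fun j => Real.sqrt ((Matrix.isHermitian_conjTranspose_mul_self M).eigenvalues j) :=
  rfl

lemma card_le_card_of_mul_transpose_eq_one {κ ι : Type*} [Fintype κ] [Fintype ι] [DecidableEq κ]
    {W : Matrix κ ι ℝ} (hW : W * Wᵀ = 1) : Fintype.card κ ≤ Fintype.card ι :=
  calc Fintype.card κ = (W * Wᵀ).rank := by rw [hW, Matrix.rank_one]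
    _ ≤ W.rank := Matrix.rank_mul_le_left _ _
    _ ≤ Fintype.card ι := Matrix.rank_le_card_width W

open Polynomial in
lemma map_eigenvalues_eq_of_eq_transpose_mul_mul {κ ι : Type*} [Fintype κ] [Fintype ι]
    [DecidableEq κ] [DecidableEq ι] {A : Matrix ι ι ℝ} {B : Matrix κ κ ℝ} {W : Matrix κ ι ℝ}
    (hA : A.IsHermitian) (hB : B.IsHermitian) (hW : W * Wᵀ = 1) (hAB : A = Wᵀ * B * W) :
    Finset.univ.val.map hA.eigenvalues =
      Multiset.replicate (Fintype.card ι - Fintype.card κ) 0 +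
        Finset.univ.val.map hB.eigenvalues := by
  have hcharpoly : A.charpoly = X ^ (Fintype.card ι - Fintype.card κ) * B.charpoly := by
    rw [hAB, Matrix.mul_assoc,
      charpoly_mul_comm_of_le _ _ (card_le_card_of_mul_transpose_eq_one hW), Matrix.mul_assoc, hW,
      Matrix.mul_one]
  have hroots := congrArg Polynomial.roots hcharpoly
  rw [roots_mul ((monic_X_pow _).mul B.charpoly_monic).ne_zero, roots_X_pow,
    hA.roots_charpoly_eq_eigenvalues, hB.roots_charpoly_eq_eigenvalues,
    RCLike.ofReal_real_eq_id, Function.id_comp, Function.id_comp] at hroots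
  simpa [Multiset.nsmul_singleton] using hroots

lemma singularValues_eq_of_transpose_mul_self_eq {a a' b : ℕ} {M : Matrix (Fin a) (Fin b) ℝ}
    {N : Matrix (Fin a') (Fin b) ℝ} (h : Mᵀ * M = Nᵀ * N) :
    singularValues M = singularValues N := by
  have heig : (Matrix.isHermitian_conjTranspose_mul_self M).eigenvalues =
      (Matrix.isHermitian_conjTranspose_mul_self N).eigenvalues :=
    Matrix.IsHermitian.eigenvalues_eq_eigenvalues_iff _ _ |>.2 <| by
      simp only [Matrix.conjTranspose_eq_transpose_of_trivial, h]
  rw [singularValues_eq_descSort, singularValues_eq_descSort, heig]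

lemma singularValues_mul_of_transpose_mul_eq_one {a b c : ℕ} (Q : Matrix (Fin a) (Fin b) ℝ)
    (M : Matrix (Fin b) (Fin c) ℝ) (hQ : Qᵀ * Q = 1) :
    singularValues (Q * M) = singularValues M :=
  singularValues_eq_of_transpose_mul_self_eq <| by
    rw [Matrix.transpose_mul, Matrix.mul_assoc, ← Matrix.mul_assoc Qᵀ, hQ, Matrix.one_mul]

lemma padZero_singularValues_mul_of_mul_transpose_eq_one {a b c : ℕ} (M : Matrix (Fin a) (Fin b) ℝ)
    (W : Matrix (Fin b) (Fin c) ℝ) (hW : W * Wᵀ = 1) :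
    padZero (singularValues (M * W)) = padZero (singularValues M) := by
  have heig := map_eigenvalues_eq_of_eq_transpose_mul_mul
    (Matrix.isHermitian_conjTranspose_mul_self (M * W))
    (Matrix.isHermitian_conjTranspose_mul_self M) hW
    (by simp only [Matrix.conjTranspose_eq_transpose_of_trivial, Matrix.transpose_mul,
      Matrix.mul_assoc])
  rw [singularValues_eq_descSort, singularValues_eq_descSort]
  refine padZero_descSort_eq_of_map_eq _ _ (fun _ => Real.sqrt_nonneg _) ?_
  simpa [Multiset.map_map, Function.comp_def] using congrArg (Multiset.map Real.sqrt) heig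

open Filter Topology

lemma Matrix.eq_zero_of_mul_transpose_self_apply_eq_zero {m n : Type*} [Fintype m]
    {C : Matrix n m ℝ} {i : n}
    (h : (C * Cᵀ) i i = 0) (j : m) : C i j = 0 :=
  congrFun (dotProduct_self_eq_zero.1 h) j

/-- Where `d i = 0` the limit entry is `0⁻¹ * C i j = 0`, by the convention `0⁻¹ = 0`. -/
lemma tendsto_diagonal_inv_add_mul {m n : Type*} [Fintype n] [DecidableEq n] (d : n → ℝ)
    (C : Matrix n m ℝ)
    (hC : ∀ i j, d i = 0 → C i j = 0) :
    Tendsto (fun ε : ℝ => diagonal (fun i => (d i + ε)⁻¹) * C) (𝓝 0) (𝓝 (diagonal d⁻¹ * C)) := by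
  refine tendsto_pi_nhds.2 fun i => tendsto_pi_nhds.2 fun j => ?_
  simp only [diagonal_mul, Pi.inv_apply]
  by_cases hdi : d i = 0
  · simp only [hC i j hdi, mul_zero, tendsto_const_nhds]
  · refine Tendsto.mul_const _ (Tendsto.inv₀ ?_ hdi)
    exact (continuous_const.add continuous_id).tendsto' 0 (d i) (add_zero _)

section Pinv

variable {m n p : Type*} [Fintype m] [Fintype n] [Fintype p] [DecidableEq n]

lemma Matrix.IsHermitian.eq_eigenvectorUnitary_mul_diagonal_mul_transpose {A : Matrix n n ℝ}
    (hA : A.IsHermitian) :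
    A = (hA.eigenvectorUnitary : Matrix n n ℝ) * diagonal hA.eigenvalues *
      (hA.eigenvectorUnitary : Matrix n n ℝ)ᵀ := by
  rw [← Matrix.conjTranspose_eq_transpose_of_trivial]
  exact hA.spectral_theorem.trans (by rw [Unitary.conjStarAlgAut_apply]; rfl)

lemma Matrix.IsHermitian.transpose_eigenvectorUnitary_mul {A : Matrix n n ℝ} (hA : A.IsHermitian) :
    (hA.eigenvectorUnitary : Matrix n n ℝ)ᵀ * hA.eigenvectorUnitary = 1 := by
  rw [← Matrix.conjTranspose_eq_transpose_of_trivial]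
  exact Unitary.coe_star_mul_self hA.eigenvectorUnitary

lemma Matrix.IsHermitian.eigenvectorUnitary_mul_transpose {A : Matrix n n ℝ} (hA : A.IsHermitian) :
    (hA.eigenvectorUnitary : Matrix n n ℝ) * (hA.eigenvectorUnitary : Matrix n n ℝ)ᵀ = 1 := by
  rw [← Matrix.conjTranspose_eq_transpose_of_trivial]
  exact Unitary.coe_mul_star_self hA.eigenvectorUnitary

lemma Matrix.inv_mul_diagonal_mul_transpose {V : Matrix n n ℝ} (hV : Vᵀ * V = 1) (hV' : V * Vᵀ = 1)
    {d : n → ℝ} (hd : ∀ i, d i ≠ 0) :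
    (V * diagonal d * Vᵀ)⁻¹ = V * diagonal d⁻¹ * Vᵀ := by
  refine Matrix.inv_eq_right_inv ?_
  have hdd : diagonal d * diagonal d⁻¹ = 1 := by
    rw [diagonal_mul_diagonal, ← diagonal_one]
    exact congrArg diagonal (funext fun i => mul_inv_cancel₀ (hd i))
  calc V * diagonal d * Vᵀ * (V * diagonal d⁻¹ * Vᵀ)
      = V * (diagonal d * (Vᵀ * V) * diagonal d⁻¹) * Vᵀ := by simp only [Matrix.mul_assoc]
    _ = 1 := by rw [hV, Matrix.mul_one, hdd, Matrix.mul_one, hV']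

lemma exists_tendsto_tikhonov (M : Matrix m n ℝ) :
    ∃ P, Tendsto (fun ε : ℝ => (Mᵀ * M + ε • 1)⁻¹ * Mᵀ) (𝓝[>] 0) (𝓝 P) := by
  set hH := Matrix.isHermitian_conjTranspose_mul_self M
  set V : Matrix n n ℝ := ↑hH.eigenvectorUnitary
  set d := hH.eigenvalues
  have hVV : Vᵀ * V = 1 := hH.transpose_eigenvectorUnitary_mul
  have hVV' : V * Vᵀ = 1 := hH.eigenvectorUnitary_mul_transpose
  have hspec : Mᵀ * M = V * diagonal d * Vᵀ := hH.eq_eigenvectorUnitary_mul_diagonal_mul_transpose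
  have hC : ∀ i j, d i = 0 → (Vᵀ * Mᵀ) i j = 0 := by
    refine fun i j hi => Matrix.eq_zero_of_mul_transpose_self_apply_eq_zero ?_ j
    have hCC : Vᵀ * Mᵀ * (Vᵀ * Mᵀ)ᵀ = Vᵀ * (Mᵀ * M) * V := by
      simp only [Matrix.transpose_mul, Matrix.transpose_transpose, Matrix.mul_assoc]
    rw [hCC, hspec]
    simp [← Matrix.mul_assoc, hVV, Matrix.mul_assoc _ _ V, hi]
  have hreg : ∀ ε ∈ Set.Ioi (0 : ℝ), (Mᵀ * M + ε • 1)⁻¹ * Mᵀ =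
      V * (diagonal (fun i => (d i + ε)⁻¹) * (Vᵀ * Mᵀ)) := by
    intro ε hε
    have hshift : Mᵀ * M + ε • 1 = V * diagonal (fun i => d i + ε) * Vᵀ := by
      have hdiag : (diagonal fun i => d i + ε) = diagonal d + ε • 1 := by
        rw [smul_one_eq_diagonal, diagonal_add]
      rw [hdiag, hspec, Matrix.mul_add, Matrix.add_mul, Matrix.mul_smul, Matrix.mul_one,
        Matrix.smul_mul, hVV']
    have hpos : ∀ i, d i + ε ≠ 0 := fun i =>
      (add_pos_of_nonneg_of_pos ((Matrix.posSemidef_conjTranspose_mul_self M).eigenvalues_nonneg i)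
        hε).ne'
    rw [hshift, Matrix.inv_mul_diagonal_mul_transpose hVV hVV' hpos]
    simp only [Matrix.mul_assoc, Pi.inv_def]
  refine ⟨V * (diagonal d⁻¹ * (Vᵀ * Mᵀ)), ?_⟩
  refine Tendsto.congr' (eventuallyEq_nhdsWithin_of_eqOn fun ε hε => (hreg ε hε).symm) ?_
  exact ((continuous_const.matrix_mul continuous_id).tendsto _).comp
    ((tendsto_diagonal_inv_add_mul d _ hC).mono_left nhdsWithin_le_nhds)

lemma tendsto_tikhonov_pinv (M : Matrix m n ℝ) :
    Tendsto (fun ε : ℝ => (Mᵀ * M + ε • 1)⁻¹ * Mᵀ) (𝓝[>] 0) (𝓝 (pinv M)) :=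
  tendsto_nhds_limUnder (exists_tendsto_tikhonov M)

lemma pinv_mul_of_transpose_mul_eq_one [DecidableEq m] (Q : Matrix p m ℝ) (M : Matrix m n ℝ)
    (hQ : Qᵀ * Q = 1) :
    pinv (Q * M) = pinv M * Qᵀ := by
  have hgram : (Q * M)ᵀ * (Q * M) = Mᵀ * M := by
    rw [Matrix.transpose_mul, Matrix.mul_assoc, ← Matrix.mul_assoc Qᵀ, hQ, Matrix.one_mul]
  refine Tendsto.limUnder_eq ?_
  simp only [hgram]
  simp only [Matrix.transpose_mul, ← Matrix.mul_assoc]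
  exact ((continuous_id.matrix_mul continuous_const).tendsto _).comp (tendsto_tikhonov_pinv M)

end Pinv

theorem generalized_nystrom_small_matrix_singular_values_general
    (m n r ℓ : ℕ)
    (A : Matrix (Fin m) (Fin n) ℝ)
    (tV : Matrix (Fin n) (Fin r) ℝ) (tU : Matrix (Fin m) (Fin (r + ℓ)) ℝ)
    (Q₁ : Matrix (Fin m) (Fin r) ℝ) (R₁ : Matrix (Fin r) (Fin r) ℝ)
    (Q₂ : Matrix (Fin n) (Fin (r + ℓ)) ℝ) (R₂ : Matrix (Fin (r + ℓ)) (Fin (r + ℓ)) ℝ)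
    (Q₃ : Matrix (Fin (r + ℓ)) (Fin r) ℝ) (R₃ : Matrix (Fin r) (Fin r) ℝ)
    (hQR₁ : A * tV = Q₁ * R₁)
    (hQR₂ : (tUᵀ * A)ᵀ = Q₂ * R₂)
    (hQR₃ : tUᵀ * A * tV = Q₃ * R₃)
    (hQ₁ : Q₁ᵀ * Q₁ = 1) (hQ₂ : Q₂ᵀ * Q₂ = 1) (hQ₃ : Q₃ᵀ * Q₃ = 1) :
    (∀ i : ℕ,
      padZero (singularValues (A * tV * pinv (tUᵀ * A * tV) * (tUᵀ * A))) i =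
        padZero (singularValues (R₁ * pinv R₃ * Q₃ᵀ * R₂ᵀ)) i) ∧
    (∀ i : ℕ,
      padZero (singularValues (Q₁ * R₁ * pinv (Q₃ * R₃) * R₂ᵀ * Q₂ᵀ)) i =
        padZero (singularValues (R₁ * pinv R₃ * Q₃ᵀ * R₂ᵀ)) i) := by
  set S := R₁ * pinv R₃ * Q₃ᵀ * R₂ᵀ
  have hsketch : tUᵀ * A = R₂ᵀ * Q₂ᵀ := by
    rw [← Matrix.transpose_transpose (tUᵀ * A), hQR₂, Matrix.transpose_mul]
  have hpinv : pinv (Q₃ * R₃) = pinv R₃ * Q₃ᵀ := pinv_mul_of_transpose_mul_eq_one Q₃ R₃ hQ₃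
  have hGN : Q₁ * R₁ * pinv (Q₃ * R₃) * R₂ᵀ * Q₂ᵀ = Q₁ * (S * Q₂ᵀ) := by
    simp only [S, hpinv, Matrix.mul_assoc]
  have hsmall : padZero (singularValues (Q₁ * (S * Q₂ᵀ))) = padZero (singularValues S) := by
    rw [singularValues_mul_of_transpose_mul_eq_one Q₁ _ hQ₁,
      padZero_singularValues_mul_of_mul_transpose_eq_one S Q₂ᵀ
        (by rwa [Matrix.transpose_transpose])]
  refine ⟨fun i => ?_, fun i => ?_⟩
  · rw [hQR₁, hQR₃, hsketch, ← hsmall, ← hGN]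
    simp only [Matrix.mul_assoc]
  · rw [hGN, hsmall]

/-- The identity underlying Algorithm 6.1: given economic QR factorizations
`AṼ = Q₁R₁`, `(Ũ*A)* = Q₂R₂` and `Ũ*AṼ = Q₃R₃`, the (nonzero) singular values of
the generalized Nyström approximation `A_GN = AṼ(Ũ*AṼ)†Ũ*A = Q₁R₁(Q₃R₃)†R₂*Q₂*`
coincide, up to trailing zeros, with those of the small matrix `R₁R₃†Q₃*R₂*`. -/
theorem generalized_nystrom_small_matrix_singular_values
    (m n r ℓ : ℕ)
    (A : Matrix (Fin m) (Fin n) ℝ)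
    (tV : Matrix (Fin n) (Fin r) ℝ) (tU : Matrix (Fin m) (Fin (r + ℓ)) ℝ)
    (Q₁ : Matrix (Fin m) (Fin r) ℝ) (R₁ : Matrix (Fin r) (Fin r) ℝ)
    (Q₂ : Matrix (Fin n) (Fin (r + ℓ)) ℝ) (R₂ : Matrix (Fin (r + ℓ)) (Fin (r + ℓ)) ℝ)
    (Q₃ : Matrix (Fin (r + ℓ)) (Fin r) ℝ) (R₃ : Matrix (Fin r) (Fin r) ℝ)
    (hQR₁ : A * tV = Q₁ * R₁)
    (hQR₂ : (tUᵀ * A)ᵀ = Q₂ * R₂)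
    (hQR₃ : tUᵀ * A * tV = Q₃ * R₃)
    (hQ₁ : Q₁ᵀ * Q₁ = 1) (hQ₂ : Q₂ᵀ * Q₂ = 1) (hQ₃ : Q₃ᵀ * Q₃ = 1)
    (hR₁ : ∀ i j : Fin r, (j : ℕ) < (i : ℕ) → R₁ i j = 0)
    (hR₂ : ∀ i j : Fin (r + ℓ), (j : ℕ) < (i : ℕ) → R₂ i j = 0)
    (hR₃ : ∀ i j : Fin r, (j : ℕ) < (i : ℕ) → R₃ i j = 0) :
    (∀ i : ℕ,
      padZero (singularValues (A * tV * pinv (tUᵀ * A * tV) * (tUᵀ * A))) i =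
        padZero (singularValues (R₁ * pinv R₃ * Q₃ᵀ * R₂ᵀ)) i) ∧
    (∀ i : ℕ,
      padZero (singularValues (Q₁ * R₁ * pinv (Q₃ * R₃) * R₂ᵀ * Q₂ᵀ)) i =
        padZero (singularValues (R₁ * pinv R₃ * Q₃ᵀ * R₂ᵀ)) i) :=
  generalized_nystrom_small_matrix_singular_values_general m n r ℓ A tV tU Q₁ R₁ Q₂ R₂ Q₃ R₃ hQR₁
    hQR₂ hQR₃ hQ₁ hQ₂ hQ₃
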